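/- Suppose μ is even (μ(−y) = μ(y) for all y) and strictly decreasing on (0, ∞) (the flat highlighting case, where the highlighting propensity of items decreases with distance from the truth). Then for every η ≥ 0, MIS is differentiable at η with MIS′(η) < 0; i.e., increasing the weight on highlighting strictly decreases misinformation (Proposition 1, flat case). -/

import Mathlib

/-!
Because `Λ` is affine with slope `s > 0` and `∂π/∂η = (M - 1)(μ - μ̄)/D²`, differentiating under
the integral sign gives `MIS'(η) = s (M - 1) ∫ |y| (μ(y) - μ̄) / D(η,y)² g(y) dy`.
Since `μ` is even and strictly decreasing in `|y|` with `g`-mean `μ̄`, there is a threshold `T ≥ 0`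
with `μ > μ̄` for `|y| < T` and `μ < μ̄` for `|y| > T`. Writing `D = A + η (μ - μ̄)` with
`A = M (1 + η μ̄)`, we get `D ≥ A` exactly where `μ ≥ μ̄`, hence
`|y| (μ - μ̄) / D² ≤ T (μ - μ̄) / A²` pointwise, strictly for `y > T`; the right-hand side
integrates to `0` against `g` by the definition of `μ̄`.
-/

open MeasureTheory

/-- Density of the normal distribution `N(0, σ²)`. -/
noncomputable def gauss (σ y : ℝ) : ℝ :=
  (Real.sqrt (2 * Real.pi * σ ^ 2))⁻¹ * Real.exp (-(y ^ 2) / (2 * σ ^ 2))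

/-- Mean highlighting propensity `μ̄ = ∫ μ(y)·g(y) dy`. -/
noncomputable def mubar (σ : ℝ) (μ : ℝ → ℝ) : ℝ :=
  ∫ y : ℝ, μ y * gauss σ y

/-- Denominator `D(η,y) = M·(1 + η·μ̄) + η·(μ(y) − μ̄)`. -/
noncomputable def Dfun (σ : ℝ) (μ : ℝ → ℝ) (M η y : ℝ) : ℝ :=
  M * (1 + η * mubar σ μ) + η * (μ y - mubar σ μ)

/-- Expected popularity `π(η,y) = (1 + η·μ(y))/D(η,y)`. -/
noncomputable def popEx (σ : ℝ) (μ : ℝ → ℝ) (M η y : ℝ) : ℝ :=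
  (1 + η * μ y) / Dfun σ μ M η y

/-- The affine clicking response
`Λ(z) = (M + log β·(M − ζ₀ + ζ₁·z))/(M + log β·M·(M − 1)/2)`. -/
noncomputable def Lam (M β ζ₀ ζ₁ z : ℝ) : ℝ :=
  (M + Real.log β * (M - ζ₀ + ζ₁ * z)) / (M + Real.log β * M * (M - 1) / 2)

/-- The slope of `Λ`: `s = ζ₁·log β/(M + log β·M·(M − 1)/2)`. -/
noncomputable def slopeLam (M β ζ₁ : ℝ) : ℝ :=
  ζ₁ * Real.log β / (M + Real.log β * M * (M - 1) / 2)

/-- Misinformation `MIS(η) = ∫ |y|·Λ(π(η,y))·g(y) dy` (true state `θ = 0`). -/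
noncomputable def MIS (σ : ℝ) (μ : ℝ → ℝ) (M β ζ₀ ζ₁ η : ℝ) : ℝ :=
  ∫ y : ℝ, |y| * Lam M β ζ₀ ζ₁ (popEx σ μ M η y) * gauss σ y

open Set Metric

theorem integral_lt_integral_of_ae_le_of_lt_on {α : Type*} [MeasurableSpace α] {ν : Measure α}
    {f g : α → ℝ} (hf : Integrable f ν) (hg : Integrable g ν) (hle : f ≤ᵐ[ν] g) {S : Set α}
    (hS : ν S ≠ 0) (hlt : ∀ x ∈ S, f x < g x) :
    ∫ x, f x ∂ν < ∫ x, g x ∂ν := by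
  rw [← sub_pos, ← integral_sub hg hf,
    integral_pos_iff_support_of_nonneg_ae (hle.mono fun x => sub_nonneg.2) (hg.sub hf)]
  exact pos_iff_ne_zero.2 fun h => hS (measure_mono_null (fun x hx => (sub_pos.2 (hlt x hx)).ne') h)

theorem hasDerivAt_integral_mul_of_bounded {α : Type*} [MeasurableSpace α] {ν : Measure α}
    {w : α → ℝ} (hw : Integrable w ν) {φ φ' : ℝ → α → ℝ} {x₀ ε C C' : ℝ} (hε : 0 < ε)
    (hφ_meas : ∀ x, AEStronglyMeasurable (φ x) ν) (hφ'_meas : AEStronglyMeasurable (φ' x₀) ν)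
    (hφ_bound : ∀ a, |φ x₀ a| ≤ C) (hφ'_bound : ∀ x ∈ ball x₀ ε, ∀ a, |φ' x a| ≤ C')
    (hφ_deriv : ∀ x ∈ ball x₀ ε, ∀ a, HasDerivAt (φ · a) (φ' x a) x) :
    HasDerivAt (fun x => ∫ a, w a * φ x a ∂ν) (∫ a, w a * φ' x₀ a ∂ν) x₀ :=
  (hasDerivAt_integral_of_dominated_loc_of_deriv_le (bound := fun a => C' * ‖w a‖)
    (ball_mem_nhds x₀ hε)
    (Filter.Eventually.of_forall fun x => hw.aestronglyMeasurable.mul (hφ_meas x))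
    (hw.mul_bdd (hφ_meas x₀) (ae_of_all _ hφ_bound)) (hw.aestronglyMeasurable.mul hφ'_meas)
    (ae_of_all _ fun a x hx => by
      rw [norm_mul, mul_comm, Real.norm_eq_abs (φ' x a)]
      exact mul_le_mul_of_nonneg_right (hφ'_bound x hx a) (norm_nonneg _))
    (hw.norm.const_mul C')
    (ae_of_all _ fun a x hx => (hφ_deriv x hx a).const_mul (w a))).2

theorem StrictAntiOn.exists_threshold {f : ℝ → ℝ} (hf : StrictAntiOn f (Ioi 0)) {c : ℝ}
    (hc : ∃ b > 0, f b < c) :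
    ∃ T ≥ 0, (∀ y ∈ Ioo 0 T, c < f y) ∧ ∀ y > T, f y < c := by
  obtain ⟨b, hb, hbc⟩ := hc
  set S := {y | 0 < y ∧ c < f y}
  have hS : BddAbove S := ⟨b, fun y ⟨hy, hcy⟩ => le_of_not_gt fun hby =>
    (hcy.trans (hf hb hy hby)).not_gt hbc⟩
  have hT : 0 ≤ sSup S := Real.sSup_nonneg fun y hy => hy.1.le
  refine ⟨sSup S, hT, ?_, fun y hy => ?_⟩
  · rintro y ⟨hy, hyT⟩
    rcases S.eq_empty_or_nonempty with hS₀ | hS₀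
    · rw [hS₀, Real.sSup_empty] at hyT
      exact absurd hy hyT.not_gt
    obtain ⟨z, ⟨hz, hcz⟩, hyz⟩ := exists_lt_of_lt_csSup hS₀ hyT
    exact hcz.trans (hf hy hz hyz)
  · obtain ⟨z, hTz, hzy⟩ := exists_between hy
    have hz : 0 < z := hT.trans_lt hTz
    have hfz : f z ≤ c := le_of_not_gt fun hcz => (le_csSup hS ⟨hz, hcz⟩).not_gt hTz
    exact (hf hz (hz.trans hzy) hzy).trans_le hfz

theorem apply_abs_of_even {f : ℝ → ℝ} (heven : ∀ y, f (-y) = f y) (y : ℝ) : f |y| = f y := by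
  rcases abs_choice y with h | h <;> rw [h]
  exact heven y

theorem div_sq_add_mul_le_div_sq {h η A : ℝ} (hη : 0 ≤ η) (hA : 0 < A) (hD : 0 < A + η * h) :
    h / (A + η * h) ^ 2 ≤ h / A ^ 2 := by
  rw [div_le_div_iff₀ (by positivity) (by positivity)]
  nlinarith [mul_nonneg (mul_nonneg hη (sq_nonneg h)) (add_pos hA hD).le]

theorem mul_div_sq_add_mul_le {x T h η A : ℝ} (hT : 0 ≤ T) (hη : 0 ≤ η) (hA : 0 < A)
    (hD : 0 < A + η * h) (hxh : (x - T) * h ≤ 0) :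
    x * (h / (A + η * h) ^ 2) ≤ T * (h / A ^ 2) := by
  have hsplit : x * (h / (A + η * h) ^ 2) =
      T * (h / (A + η * h) ^ 2) + (x - T) * h / (A + η * h) ^ 2 := by
    ring
  rw [hsplit]
  have := mul_le_mul_of_nonneg_left (div_sq_add_mul_le_div_sq hη hA hD) hT
  have := div_nonpos_of_nonpos_of_nonneg hxh (sq_nonneg (A + η * h))
  linarith

theorem mul_div_sq_add_mul_lt {x T h η A : ℝ} (hT : 0 ≤ T) (hη : 0 ≤ η) (hA : 0 < A)
    (hD : 0 < A + η * h) (hxh : (x - T) * h < 0) :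
    x * (h / (A + η * h) ^ 2) < T * (h / A ^ 2) := by
  have hsplit : x * (h / (A + η * h) ^ 2) =
      T * (h / (A + η * h) ^ 2) + (x - T) * h / (A + η * h) ^ 2 := by
    ring
  rw [hsplit]
  have := mul_le_mul_of_nonneg_left (div_sq_add_mul_le_div_sq hη hA hD) hT
  have := div_neg_of_neg_of_pos hxh (pow_pos hD 2)
  linarith

theorem gauss_eq_gaussianPDFReal (σ : ℝ) :
    gauss σ = ProbabilityTheory.gaussianPDFReal 0 ⟨σ ^ 2, sq_nonneg σ⟩ := by
  funext y
  simp [gauss, ProbabilityTheory.gaussianPDFReal]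
  rfl

theorem gauss_pos {σ : ℝ} (hσ : 0 < σ) (y : ℝ) : 0 < gauss σ y := by
  unfold gauss
  positivity

theorem measurable_gauss (σ : ℝ) : Measurable (gauss σ) := by
  rw [gauss_eq_gaussianPDFReal]
  exact ProbabilityTheory.measurable_gaussianPDFReal _ _

theorem integrable_gauss (σ : ℝ) : Integrable (gauss σ) := by
  rw [gauss_eq_gaussianPDFReal]
  exact ProbabilityTheory.integrable_gaussianPDFReal _ _

theorem integral_gauss {σ : ℝ} (hσ : 0 < σ) : ∫ y, gauss σ y = 1 := by
  rw [gauss_eq_gaussianPDFReal]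
  exact ProbabilityTheory.integral_gaussianPDFReal_eq_one 0
    (fun h => (pow_pos hσ 2).ne' (NNReal.coe_eq_zero.2 h))

theorem integrable_abs_mul_gauss {σ : ℝ} (hσ : 0 < σ) : Integrable fun y => |y| * gauss σ y := by
  refine ((integrable_mul_exp_neg_mul_sq (b := 1 / (2 * σ ^ 2)) (by positivity)).norm.const_mul
    (Real.sqrt (2 * Real.pi * σ ^ 2))⁻¹).congr (ae_of_all _ fun y => ?_)
  simp only [gauss, norm_mul, Real.norm_eq_abs, Real.abs_exp]
  ring_nf

section Model

variable {σ : ℝ} {μ : ℝ → ℝ} {M β ζ₀ ζ₁ : ℝ}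

theorem integrable_mul_gauss (hμmeas : Measurable μ) (hμ : ∀ y, μ y ∈ Icc (0 : ℝ) 1) :
    Integrable fun y => μ y * gauss σ y :=
  (integrable_gauss σ).bdd_mul hμmeas.aestronglyMeasurable (c := 1) (ae_of_all _ fun y => by
    rw [Real.norm_eq_abs, abs_of_nonneg (hμ y).1]
    exact (hμ y).2)

theorem mubar_mem_Icc (hσ : 0 < σ) (hμmeas : Measurable μ) (hμ : ∀ y, μ y ∈ Icc (0 : ℝ) 1) :
    mubar σ μ ∈ Icc (0 : ℝ) 1 := by
  refine ⟨integral_nonneg fun y => mul_nonneg (hμ y).1 (gauss_pos hσ y).le, ?_⟩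
  calc mubar σ μ ≤ ∫ y, gauss σ y :=
        integral_mono (integrable_mul_gauss hμmeas hμ) (integrable_gauss σ)
          fun y => mul_le_of_le_one_left (gauss_pos hσ y).le (hμ y).2
    _ = 1 := integral_gauss hσ

theorem integrable_sub_mubar_mul_gauss (hμmeas : Measurable μ)
    (hμ : ∀ y, μ y ∈ Icc (0 : ℝ) 1) :
    Integrable fun y => (μ y - mubar σ μ) * gauss σ y := by
  simp only [sub_mul]
  exact (integrable_mul_gauss hμmeas hμ).sub ((integrable_gauss σ).const_mul _)

theorem integral_sub_mubar_mul_gauss (hσ : 0 < σ) (hμmeas : Measurable μ)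
    (hμ : ∀ y, μ y ∈ Icc (0 : ℝ) 1) :
    ∫ y, (μ y - mubar σ μ) * gauss σ y = 0 := by
  simp only [sub_mul]
  rw [integral_sub (integrable_mul_gauss hμmeas hμ) ((integrable_gauss σ).const_mul _),
    integral_const_mul, integral_gauss hσ, mul_one, mubar, sub_self]

theorem exists_lt_mubar (hσ : 0 < σ) (hμmeas : Measurable μ) (hμ : ∀ y, μ y ∈ Icc (0 : ℝ) 1)
    (heven : ∀ y, μ (-y) = μ y) (hanti : StrictAntiOn μ (Ioi 0)) :
    ∃ b > 0, μ b < mubar σ μ := by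
  by_contra! h
  have hpos : ∫ _ : ℝ, (0 : ℝ) < ∫ y, (μ y - mubar σ μ) * gauss σ y := by
    refine integral_lt_integral_of_ae_le_of_lt_on (integrable_zero _ _ _)
      (integrable_sub_mubar_mul_gauss hμmeas hμ) ?_ (S := Ioo 0 1) (by simp) fun y hy => ?_
    · filter_upwards [volume.ae_ne 0] with y hy
      rw [← apply_abs_of_even heven]
      exact mul_nonneg (sub_nonneg.2 (h |y| (abs_pos.2 hy))) (gauss_pos hσ y).le
    · exact mul_pos (sub_pos.2 ((h 1 one_pos).trans_lt (hanti hy.1 (mem_Ioi.2 one_pos) hy.2)))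
        (gauss_pos hσ y)
  rw [integral_zero, integral_sub_mubar_mul_gauss hσ hμmeas hμ] at hpos
  exact hpos.false

theorem exists_threshold_mubar (hσ : 0 < σ) (hμmeas : Measurable μ)
    (hμ : ∀ y, μ y ∈ Icc (0 : ℝ) 1) (heven : ∀ y, μ (-y) = μ y)
    (hanti : StrictAntiOn μ (Ioi 0)) :
    ∃ T ≥ 0, (∀ y ≠ 0, (|y| - T) * (μ y - mubar σ μ) ≤ 0) ∧ ∀ y > T, μ y < mubar σ μ := by
  obtain ⟨T, hT, hbelow, habove⟩ :=
    hanti.exists_threshold (exists_lt_mubar hσ hμmeas hμ heven hanti)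
  refine ⟨T, hT, fun y hy => ?_, habove⟩
  rw [← apply_abs_of_even heven y]
  rcases lt_trichotomy |y| T with h | h | h
  · exact mul_nonpos_of_nonpos_of_nonneg (by linarith)
      (by linarith [hbelow |y| ⟨abs_pos.2 hy, h⟩])
  · rw [h, sub_self, zero_mul]
  · exact mul_nonpos_of_nonneg_of_nonpos (by linarith) (by linarith [habove |y| h])

theorem Dfun_eq (t y : ℝ) : Dfun σ μ M t y = M + t * ((M - 1) * mubar σ μ + μ y) := by
  unfold Dfun
  ring

theorem one_le_Dfun (hμ : ∀ y, μ y ∈ Icc (0 : ℝ) 1) (hm : mubar σ μ ∈ Icc (0 : ℝ) 1)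
    (hM : 2 ≤ M) {t : ℝ} (ht : -(1 / 2) ≤ t) (y : ℝ) : 1 ≤ Dfun σ μ M t y := by
  have hK₀ : 0 ≤ (M - 1) * mubar σ μ + μ y :=
    add_nonneg (mul_nonneg (by linarith) hm.1) (hμ y).1
  have hKM : (M - 1) * mubar σ μ + μ y ≤ M := by
    nlinarith [mul_le_of_le_one_right (by linarith : (0 : ℝ) ≤ M - 1) hm.2, (hμ y).2]
  rw [Dfun_eq]
  nlinarith [mul_nonneg (by linarith : 0 ≤ t + 1 / 2) hK₀]

theorem popEx_mem_Icc (hμ : ∀ y, μ y ∈ Icc (0 : ℝ) 1) (hm : mubar σ μ ∈ Icc (0 : ℝ) 1)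
    (hM : 1 ≤ M) {t : ℝ} (ht : 0 ≤ t) (y : ℝ) : popEx σ μ M t y ∈ Icc (0 : ℝ) 1 := by
  have hnum : 1 ≤ 1 + t * μ y := le_add_of_nonneg_right (mul_nonneg ht (hμ y).1)
  have hnumD : 1 + t * μ y ≤ Dfun σ μ M t y := by
    rw [Dfun_eq]
    nlinarith [mul_nonneg ht (mul_nonneg (by linarith : (0 : ℝ) ≤ M - 1) hm.1)]
  exact ⟨div_nonneg (by linarith) (by linarith), div_le_one_of_le₀ hnumD (by linarith)⟩

theorem abs_sub_mubar_div_sq_le_one (hμ : ∀ y, μ y ∈ Icc (0 : ℝ) 1)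
    (hm : mubar σ μ ∈ Icc (0 : ℝ) 1) (hM : 2 ≤ M) {t : ℝ} (ht : -(1 / 2) ≤ t) (y : ℝ) :
    |(μ y - mubar σ μ) / Dfun σ μ M t y ^ 2| ≤ 1 := by
  have hD := one_le_Dfun hμ hm hM ht y
  have hD₂ : 1 ≤ Dfun σ μ M t y ^ 2 := one_le_pow₀ hD
  rw [abs_div, abs_of_pos (by linarith : (0 : ℝ) < Dfun σ μ M t y ^ 2),
    div_le_one (by linarith)]
  exact (abs_sub_le_iff.2 ⟨by linarith [(hμ y).2, hm.1], by linarith [(hμ y).1, hm.2]⟩).trans hD₂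

theorem hasDerivAt_popEx {t y : ℝ} (hD : Dfun σ μ M t y ≠ 0) :
    HasDerivAt (fun t => popEx σ μ M t y)
      ((M - 1) * ((μ y - mubar σ μ) / Dfun σ μ M t y ^ 2)) t := by
  have hnum : HasDerivAt (fun t => 1 + t * μ y) (μ y) t := (hasDerivAt_mul_const _).const_add 1
  have hden : HasDerivAt (fun t => Dfun σ μ M t y) ((M - 1) * mubar σ μ + μ y) t := by
    simp_rw [Dfun_eq]
    exact (hasDerivAt_mul_const _).const_add M
  refine (hnum.div hden hD).congr_deriv ?_
  rw [mul_div_assoc', Dfun_eq]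
  ring

theorem Lam_eq_add (z : ℝ) : Lam M β ζ₀ ζ₁ z = Lam M β ζ₀ ζ₁ 0 + slopeLam M β ζ₁ * z := by
  simp only [Lam, slopeLam]
  ring

theorem HasDerivAt.Lam {f : ℝ → ℝ} {f' t : ℝ} (hf : HasDerivAt f f' t) :
    HasDerivAt (fun t => Lam M β ζ₀ ζ₁ (f t)) (slopeLam M β ζ₁ * f') t := by
  simp_rw [Lam_eq_add (z := f _)]
  exact (hf.const_mul _).const_add _

theorem slopeLam_pos (hM : 1 ≤ M) (hβ : 1 < β) (hζ₁ : 0 < ζ₁) : 0 < slopeLam M β ζ₁ := by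
  have hlog := Real.log_pos hβ
  refine div_pos (mul_pos hζ₁ hlog) (add_pos_of_pos_of_nonneg (by linarith) ?_)
  exact div_nonneg (mul_nonneg (mul_nonneg hlog.le (by linarith)) (by linarith)) two_pos.le

theorem hasDerivAt_MIS (hσ : 0 < σ) (hμmeas : Measurable μ) (hμ : ∀ y, μ y ∈ Icc (0 : ℝ) 1)
    (hM : 2 ≤ M) {η : ℝ} (hη : 0 ≤ η) :
    HasDerivAt (MIS σ μ M β ζ₀ ζ₁) (slopeLam M β ζ₁ * (M - 1) *
      ∫ y, |y| * gauss σ y * ((μ y - mubar σ μ) / Dfun σ μ M η y ^ 2)) η := by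
  have hm := mubar_mem_Icc hσ hμmeas hμ
  have hball : ∀ t ∈ ball η (1 / 2), -(1 / 2) ≤ t := fun t ht => by
    rw [mem_ball, Real.dist_eq, abs_lt] at ht
    linarith
  have hMIS : MIS σ μ M β ζ₀ ζ₁ =
      fun t => ∫ y, |y| * gauss σ y * Lam M β ζ₀ ζ₁ (popEx σ μ M t y) := by
    funext t
    exact integral_congr_ae (ae_of_all _ fun y => by ring)
  rw [hMIS]
  refine (hasDerivAt_integral_mul_of_bounded (integrable_abs_mul_gauss hσ) one_half_pos
    (φ' := fun t y => slopeLam M β ζ₁ * ((M - 1) * ((μ y - mubar σ μ) / Dfun σ μ M t y ^ 2)))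
    (C := |Lam M β ζ₀ ζ₁ 0| + |slopeLam M β ζ₁|) (C' := |slopeLam M β ζ₁| * (M - 1))
    (fun t => ?_) ?_ (fun y => ?_) (fun t ht y => ?_) (fun t ht y => ?_)).congr_deriv ?_
  · exact (by simp only [Lam, popEx, Dfun]; fun_prop : Measurable _).aestronglyMeasurable
  · exact (by simp only [Dfun]; fun_prop : Measurable _).aestronglyMeasurable
  · have hπ := popEx_mem_Icc hμ hm (by linarith : (1 : ℝ) ≤ M) hη y
    rw [Lam_eq_add]
    refine (abs_add_le _ _).trans (add_le_add_right ?_ _)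
    rw [abs_mul]
    exact mul_le_of_le_one_right (abs_nonneg _) (abs_le.2 ⟨by linarith [hπ.1], hπ.2⟩)
  · rw [abs_mul, abs_mul, abs_of_nonneg (by linarith : (0 : ℝ) ≤ M - 1)]
    exact mul_le_mul_of_nonneg_left (mul_le_of_le_one_right (by linarith)
      (abs_sub_mubar_div_sq_le_one hμ hm hM (hball t ht) y)) (abs_nonneg _)
  · exact (hasDerivAt_popEx (by linarith [one_le_Dfun hμ hm hM (hball t ht) y])).Lam
  · rw [← integral_const_mul]
    exact integral_congr_ae (ae_of_all _ fun y => by ring)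

theorem integral_abs_mul_gauss_mul_div_sq_neg (hσ : 0 < σ) (hμmeas : Measurable μ)
    (hμ : ∀ y, μ y ∈ Icc (0 : ℝ) 1) (hM : 2 ≤ M) (heven : ∀ y, μ (-y) = μ y)
    (hanti : StrictAntiOn μ (Ioi 0)) {η : ℝ} (hη : 0 ≤ η) :
    ∫ y, |y| * gauss σ y * ((μ y - mubar σ μ) / Dfun σ μ M η y ^ 2) < 0 := by
  obtain ⟨T, hT, hsign, habove⟩ := exists_threshold_mubar hσ hμmeas hμ heven hanti
  have hm := mubar_mem_Icc hσ hμmeas hμ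
  set A := M * (1 + η * mubar σ μ)
  have hA : 0 < A := mul_pos (by linarith) (by nlinarith [mul_nonneg hη hm.1])
  have hD : ∀ y, 0 < A + η * (μ y - mubar σ μ) := fun y =>
    one_pos.trans_le (one_le_Dfun hμ hm hM (by linarith) y)
  have hlhs : ∀ y, |y| * gauss σ y * ((μ y - mubar σ μ) / Dfun σ μ M η y ^ 2) =
      |y| * ((μ y - mubar σ μ) / (A + η * (μ y - mubar σ μ)) ^ 2) * gauss σ y :=
    fun y => mul_right_comm _ _ _
  have hrhs : ∀ y, T * ((μ y - mubar σ μ) / A ^ 2) * gauss σ y =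
      T / A ^ 2 * ((μ y - mubar σ μ) * gauss σ y) := fun y => by ring
  calc ∫ y, |y| * gauss σ y * ((μ y - mubar σ μ) / Dfun σ μ M η y ^ 2)
      < ∫ y, T / A ^ 2 * ((μ y - mubar σ μ) * gauss σ y) := by
        refine integral_lt_integral_of_ae_le_of_lt_on ?_
          ((integrable_sub_mubar_mul_gauss hμmeas hμ).const_mul _) ?_ (S := Ioi T) (by simp)
          fun y (hy : T < y) => ?_
        · refine (integrable_abs_mul_gauss hσ).mul_bdd ?_ (ae_of_all _ fun y =>
            (Real.norm_eq_abs _).trans_le (abs_sub_mubar_div_sq_le_one hμ hm hM (by linarith) y))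
          exact (by simp only [Dfun]; fun_prop : Measurable _).aestronglyMeasurable
        · filter_upwards [volume.ae_ne 0] with y hy
          rw [hlhs, ← hrhs]
          exact mul_le_mul_of_nonneg_right (mul_div_sq_add_mul_le hT hη hA (hD y) (hsign y hy))
            (gauss_pos hσ y).le
        · rw [hlhs, ← hrhs]
          refine mul_lt_mul_of_pos_right (mul_div_sq_add_mul_lt hT hη hA (hD y) ?_)
            (gauss_pos hσ y)
          rw [abs_of_pos (hT.trans_lt hy)]
          exact mul_neg_of_pos_of_neg (by linarith) (by linarith [habove y hy])
    _ = 0 := by rw [integral_const_mul, integral_sub_mubar_mul_gauss hσ hμmeas hμ, mul_zero]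

end Model

/-- If `μ` is even and strictly decreasing on `(0, ∞)` (flat
case), then for every `η ≥ 0`, `MIS` is differentiable at `η` with
`MIS′(η) < 0`: increasing the weight on highlighting strictly decreases
misinformation. -/
theorem MIS_deriv_neg_flat (σ : ℝ) (hσ : 0 < σ)
    (μ : ℝ → ℝ) (hμmeas : Measurable μ) (hμ : ∀ y, μ y ∈ Set.Icc (0:ℝ) 1)
    (M : ℝ) (hM : 2 ≤ M) (β ζ₀ ζ₁ : ℝ) (hβ : 1 < β) (hζ₁ : 0 < ζ₁)
    (heven : ∀ y, μ (-y) = μ y)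
    (hanti : StrictAntiOn μ (Set.Ioi (0:ℝ))) :
    ∀ η : ℝ, 0 ≤ η →
      DifferentiableAt ℝ (MIS σ μ M β ζ₀ ζ₁) η ∧
        deriv (MIS σ μ M β ζ₀ ζ₁) η < 0 := by
  intro η hη
  have hderiv := hasDerivAt_MIS (β := β) (ζ₀ := ζ₀) (ζ₁ := ζ₁) hσ hμmeas hμ hM hη
  refine ⟨hderiv.differentiableAt, ?_⟩
  rw [hderiv.deriv]
  exact mul_neg_of_pos_of_neg (mul_pos (slopeLam_pos (by linarith) hβ hζ₁) (by linarith))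
    (integral_abs_mul_gauss_mul_div_sq_neg hσ hμmeas hμ hM heven hanti hη)
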